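/- There exist a group G and elements x, y, z, w ∈ G with the following properties: Nat.card G = 256; orderOf x = 8, orderOf z = 8, y^2 = 1, w^2 = 1; y⁻¹ * x * y = x^3; w⁻¹ * z * w = z^3; x * z = z * x; y⁻¹ * z * y = z; w⁻¹ * x * w = x^3; w⁻¹ * y * w = y; Nat.card (Subgroup.closure {x, y}) = 16; Nat.card (Subgroup.closure {z, w}) = 16; Subgroup.closure {x, y} ⊓ Subgroup.closure {z, w} = ⊥; Subgroup.closure {x, y, z, w} = ⊤; and both Subgroup.zpowers x and Subgroup.zpowers z are normal subgroups of G. (This realises the parameter tuple (a, s, t, c) = (0, 2, 0, 0) for n = m = 4, with the non-trivial value s = 2, since w⁻¹xw = x^(1+2).) -/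

import Mathlib

/-!
Take `G = (ℤ/8 × ℤ/8) ⋊ (ℤ/2 × ℤ/2)`, written as quadruples `(a, b, c, d)`, where `c` acts on the
first factor by multiplication by `3` and `d` acts on both factors by multiplication by `3`.
With `x, z` the generators of the two cyclic factors and `y, w` those of the two involutions,
`⟨x, y⟩ = {b = d = 0}` and `⟨z, w⟩ = {a = c = 0}` are two copies of `SD₁₆` meeting trivially,
and `w` acts on `x` by cubing, which is the parameter `s = 2`. Every relation is a finite
computation; normality of `⟨x⟩` and `⟨z⟩` follows from the relations, since each generator
conjugates `x` and `z` into their own cyclic subgroups.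
-/

namespace Subgroup

variable {G : Type*} [Group G] [Finite G]

theorem normal_of_map_conj_le {s : Set G} (hs : closure s = ⊤) {H : Subgroup G}
    (hH : ∀ g ∈ s, H.map (MulAut.conj g⁻¹).toMonoidHom ≤ H) : H.Normal := by
  have hsub : s ⊆ normalizer (H : Set G) := fun g hg => by
    -- conjugation is injective, so in a finite group `map ≤ H` forces equality
    have hmap : H.map (MulAut.conj g⁻¹).toMonoidHom = H :=
      eq_of_le_of_card_ge (hH g hg)
        (card_map_of_injective (MulAut.conj g⁻¹).injective).ge
    exact inv_inv g ▸ (normalizer (H : Set G)).inv_mem (mem_normalizer_iff_map_conj_eq.2 hmap)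
  rw [← normalizer_eq_top_iff, eq_top_iff, ← hs]
  exact closure_le _ |>.2 hsub

theorem zpowers_normal_of_conj_mem {s : Set G} (hs : closure s = ⊤) {a : G}
    (ha : ∀ g ∈ s, g⁻¹ * a * g ∈ zpowers a) : (zpowers a).Normal :=
  normal_of_map_conj_le hs fun g hg => by
    rw [MonoidHom.map_zpowers, zpowers_le]
    simpa [MulAut.conj_apply] using ha g hg

end Subgroup

namespace SDProduct

def twist (c : ZMod 2) : ZMod 8 := 3 ^ c.val

lemma twist_add : ∀ c c', twist (c + c') = twist c * twist c' := by decide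
lemma twist_neg : ∀ c, twist (-c) = twist c := by decide
lemma twist_zero : twist 0 = 1 := by decide

@[ext] structure G : Type where
  a : ZMod 8
  b : ZMod 8
  c : ZMod 2
  d : ZMod 2
deriving DecidableEq, Fintype

instance : Mul G :=
  ⟨fun g h => ⟨g.a + twist g.c * twist g.d * h.a, g.b + twist g.d * h.b, g.c + h.c, g.d + h.d⟩⟩
instance : One G := ⟨⟨0, 0, 0, 0⟩⟩
instance : Inv G := ⟨fun g => ⟨-(twist g.c * twist g.d * g.a), -(twist g.d * g.b), -g.c, -g.d⟩⟩

@[simp] lemma mul_a (g h : G) : (g * h).a = g.a + twist g.c * twist g.d * h.a := rfl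
@[simp] lemma mul_b (g h : G) : (g * h).b = g.b + twist g.d * h.b := rfl
@[simp] lemma mul_c (g h : G) : (g * h).c = g.c + h.c := rfl
@[simp] lemma mul_d (g h : G) : (g * h).d = g.d + h.d := rfl
@[simp] lemma inv_a (g : G) : g⁻¹.a = -(twist g.c * twist g.d * g.a) := rfl
@[simp] lemma inv_b (g : G) : g⁻¹.b = -(twist g.d * g.b) := rfl
@[simp] lemma inv_c (g : G) : g⁻¹.c = -g.c := rfl
@[simp] lemma inv_d (g : G) : g⁻¹.d = -g.d := rfl
@[simp] lemma one_a : (1 : G).a = 0 := rfl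
@[simp] lemma one_b : (1 : G).b = 0 := rfl
@[simp] lemma one_c : (1 : G).c = 0 := rfl
@[simp] lemma one_d : (1 : G).d = 0 := rfl

instance : Group G where
  mul_assoc g h k := by ext <;> simp only [mul_a, mul_b, mul_c, mul_d, twist_add] <;> ring
  one_mul g := by ext <;> simp [twist_zero]
  mul_one g := by ext <;> simp
  inv_mul_cancel g := by
    ext <;> simp only [mul_a, mul_b, mul_c, mul_d, inv_a, inv_b, inv_c, inv_d, one_a, one_b,
      one_c, one_d, twist_neg, neg_add_cancel]

def x : G := ⟨1, 0, 0, 0⟩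
def y : G := ⟨0, 0, 1, 0⟩
def z : G := ⟨0, 1, 0, 0⟩
def w : G := ⟨0, 0, 0, 1⟩

set_option maxRecDepth 10000 in
lemma card_G : Nat.card G = 256 := by
  rw [Nat.card_eq_fintype_card]
  rfl

lemma orderOf_x : orderOf x = 8 := (orderOf_eq_iff (by norm_num)).2 ⟨by decide, by decide⟩
lemma orderOf_z : orderOf z = 8 := (orderOf_eq_iff (by norm_num)).2 ⟨by decide, by decide⟩

lemma y_sq : y ^ 2 = 1 := by decide
lemma w_sq : w ^ 2 = 1 := by decide
lemma conj_y_x : y⁻¹ * x * y = x ^ 3 := by decide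
lemma conj_w_z : w⁻¹ * z * w = z ^ 3 := by decide
lemma x_mul_z : x * z = z * x := by decide
lemma conj_y_z : y⁻¹ * z * y = z := by decide
lemma conj_w_x : w⁻¹ * x * w = x ^ 3 := by decide
lemma conj_w_y : w⁻¹ * y * w = y := by decide

set_option maxRecDepth 40000 in
lemma eq_normalForm : ∀ g : G, g = x ^ g.a.val * z ^ g.b.val * y ^ g.c.val * w ^ g.d.val := by
  decide

lemma closure_generators : Subgroup.closure {x, y, z, w} = ⊤ := by
  refine eq_top_iff.2 fun g _ => ?_
  rw [eq_normalForm g]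
  refine mul_mem (mul_mem (mul_mem ?_ ?_) ?_) ?_ <;>
    exact pow_mem (Subgroup.subset_closure (by simp)) _

def H : Subgroup G where
  carrier := {g | g.b = 0 ∧ g.d = 0}
  mul_mem' := by rintro g h ⟨hgb, hgd⟩ ⟨hhb, hhd⟩; simp [*]
  one_mem' := ⟨rfl, rfl⟩
  inv_mem' := by rintro g ⟨hb, hd⟩; simp [*]

def K : Subgroup G where
  carrier := {g | g.a = 0 ∧ g.c = 0}
  mul_mem' := by rintro g h ⟨hga, hgc⟩ ⟨hha, hhc⟩; simp [*]
  one_mem' := ⟨rfl, rfl⟩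
  inv_mem' := by rintro g ⟨ha, hc⟩; simp [*]

lemma closure_xy : Subgroup.closure {x, y} = H := by
  refine le_antisymm (Subgroup.closure_le _ |>.2 <| by simp [Set.insert_subset_iff, H, x, y])
    fun g ⟨hb, hd⟩ => ?_
  rw [eq_normalForm g, hb, hd]
  simpa using mul_mem (pow_mem (Subgroup.subset_closure (by simp)) _)
    (pow_mem (Subgroup.subset_closure (by simp)) _)

lemma closure_zw : Subgroup.closure {z, w} = K := by
  refine le_antisymm (Subgroup.closure_le _ |>.2 <| by simp [Set.insert_subset_iff, K, z, w])
    fun g ⟨ha, hc⟩ => ?_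
  rw [eq_normalForm g, ha, hc]
  simpa using mul_mem (pow_mem (Subgroup.subset_closure (by simp)) _)
    (pow_mem (Subgroup.subset_closure (by simp)) _)

lemma card_H : Nat.card H = 16 := by
  change Nat.card {g : G // g.b = 0 ∧ g.d = 0} = 16
  rw [Nat.card_eq_fintype_card]
  rfl

lemma card_K : Nat.card K = 16 := by
  change Nat.card {g : G // g.a = 0 ∧ g.c = 0} = 16
  rw [Nat.card_eq_fintype_card]
  rfl

lemma H_inf_K : H ⊓ K = ⊥ :=
  eq_bot_iff.2 fun _ ⟨⟨hb, hd⟩, ha, hc⟩ => Subgroup.mem_bot.2 (G.ext ha hb hc hd)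

lemma zpowers_x_normal : (Subgroup.zpowers x).Normal := by
  refine Subgroup.zpowers_normal_of_conj_mem closure_generators ?_
  simp only [Set.mem_insert_iff, Set.mem_singleton_iff]
  rintro g (rfl | rfl | rfl | rfl)
  · simp
  · exact conj_y_x ▸ Subgroup.npow_mem_zpowers x 3
  · rw [mul_assoc, x_mul_z, inv_mul_cancel_left]
    exact Subgroup.mem_zpowers x
  · exact conj_w_x ▸ Subgroup.npow_mem_zpowers x 3

lemma zpowers_z_normal : (Subgroup.zpowers z).Normal := by
  refine Subgroup.zpowers_normal_of_conj_mem closure_generators ?_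
  simp only [Set.mem_insert_iff, Set.mem_singleton_iff]
  rintro g (rfl | rfl | rfl | rfl)
  · rw [mul_assoc, ← x_mul_z, inv_mul_cancel_left]
    exact Subgroup.mem_zpowers z
  · exact conj_y_z ▸ Subgroup.mem_zpowers z
  · simp
  · exact conj_w_z ▸ Subgroup.npow_mem_zpowers z 3

end SDProduct

/-- Proposition 5.1: for `n = m = 4`, the tuple `(a, s, t, c) = (0, 2, 0, 0)`
defines an exact product of two copies of `SD_16` of order 256 with `⟨x⟩` and
`⟨z⟩` normal and with the non-trivial value `s = 2`. -/
theorem stmt_7 :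
    ∃ (G : Type) (_ : Group G) (x y z w : G),
      Nat.card G = 256 ∧
      orderOf x = 8 ∧ orderOf z = 8 ∧ y ^ 2 = 1 ∧ w ^ 2 = 1 ∧
      y⁻¹ * x * y = x ^ 3 ∧
      w⁻¹ * z * w = z ^ 3 ∧
      x * z = z * x ∧
      y⁻¹ * z * y = z ∧
      w⁻¹ * x * w = x ^ 3 ∧
      w⁻¹ * y * w = y ∧
      Nat.card (Subgroup.closure {x, y}) = 16 ∧
      Nat.card (Subgroup.closure {z, w}) = 16 ∧
      Subgroup.closure {x, y} ⊓ Subgroup.closure {z, w} = ⊥ ∧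
      Subgroup.closure {x, y, z, w} = ⊤ ∧
      (Subgroup.zpowers x).Normal ∧ (Subgroup.zpowers z).Normal := by
  open SDProduct in
  exact ⟨G, inferInstance, x, y, z, w, card_G, orderOf_x, orderOf_z, y_sq, w_sq,
    conj_y_x, conj_w_z, x_mul_z, conj_y_z, conj_w_x, conj_w_y,
    closure_xy ▸ card_H, closure_zw ▸ card_K, closure_xy ▸ closure_zw ▸ H_inf_K,
    closure_generators, zpowers_x_normal, zpowers_z_normal⟩
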